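/- arXiv:2407.10388 — 4 statements merged into one kernel-verified Lean document; each statement's English description precedes it below -/
import Mathlib

section
/- Let p be an odd prime, m ≥ 2, and G a group of order 4·p^m. Then G has a unique (hence normal) Sylow p-subgroup, provided that G is generated by three involutions ρ₀, ρ₁, ρ₂. -/
/-!
Let `n` be the number of Sylow `p`-subgroups. It divides the index `4` and is `≡ 1 mod p`, so
`n = 1` unless `n = 4` and `p = 3`. In that case let `K` be the kernel of the conjugation action
on the four Sylow `3`-subgroups: `4 ∣ [G : K] ∣ 12`. If `[G : K] = 4` then `K` is a normal Sylow
`3`-subgroup, and if `[G : K] = 12` then `G / K ≅ A₄`, whose Klein four-group pulls back to a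
normal subgroup of `G` of index `3`. Neither can happen: a group generated by involutions has no
normal subgroup of odd index other than itself.
-/

open Equiv Subgroup MulAction

namespace Nat

theorem eq_one_or_of_dvd_four_of_modEq_one {p n : ℕ} (hp : p.Prime) (hn : n ∣ 4)
    (hmod : n ≡ 1 [MOD p]) : n = 1 ∨ n = 4 ∧ p = 3 := by
  have hdiv : p ∣ n - 1 := (Nat.modEq_iff_dvd' (Nat.pos_of_dvd_of_pos hn four_pos)).mp hmod.symm
  have hle : n ≤ 4 := Nat.le_of_dvd four_pos hn
  interval_cases n
  · exact absurd hn (by norm_num)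
  · exact .inl rfl
  · exact absurd (Nat.eq_one_of_dvd_one hdiv) hp.ne_one
  · exact absurd hn (by norm_num)
  · exact .inr ⟨rfl, (Nat.prime_dvd_prime_iff_eq hp Nat.prime_three).mp hdiv⟩

theorem eq_four_or_twelve_of_dvd {r m : ℕ} (h4 : 4 ∣ r) (h24 : r ∣ 24) (hr : r ∣ 4 * 3 ^ m) :
    r = 4 ∨ r = 12 := by
  obtain ⟨s, rfl⟩ := h4
  have hs6 : s ∣ 6 := Nat.dvd_of_mul_dvd_mul_left four_pos h24
  have hs2 : ¬ 2 ∣ s := fun h2 =>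
    absurd ((Nat.prime_dvd_prime_iff_eq Nat.prime_two Nat.prime_three).mp
      (Nat.prime_two.dvd_of_dvd_pow (h2.trans (Nat.dvd_of_mul_dvd_mul_left four_pos hr))))
      (by norm_num)
  have hle : s ≤ 6 := Nat.le_of_dvd (by norm_num) hs6
  interval_cases s <;> omega

end Nat

section

variable {G : Type*} [Group G]

theorem Subgroup.eq_top_of_odd_index {N : Subgroup G} [N.Normal] (hN : Odd N.index) {S : Set G}
    (hS : closure S = ⊤) (hS2 : ∀ g ∈ S, g ^ 2 = 1) : N = ⊤ := by
  rw [eq_top_iff, ← hS, closure_le]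
  intro g hg
  have hdvd : orderOf (g : G ⧸ N) ∣ Nat.gcd 2 N.index :=
    Nat.dvd_gcd (orderOf_dvd_of_pow_eq_one (by rw [← QuotientGroup.mk_pow, hS2 g hg]; rfl))
      (_root_.orderOf_dvd_natCard (g : G ⧸ N))
  rwa [Nat.Coprime.gcd_eq_one (Nat.coprime_two_left.mpr hN), Nat.dvd_one, orderOf_eq_one_iff,
    QuotientGroup.eq_one_iff] at hdvd

theorem Sylow.index_dvd_of_card_eq_mul_pow {p k m : ℕ} [Fact p.Prime] [Finite G]
    (hG : Nat.card G = k * p ^ m) (P : Sylow p G) : (P : Subgroup G).index ∣ k := by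
  have hcop : Nat.Coprime (P : Subgroup G).index (p ^ m) :=
    Nat.Coprime.pow_right m ((Nat.coprime_comm.mp
      ((Nat.Prime.coprime_iff_not_dvd Fact.out).mpr P.not_dvd_index)))
  exact hcop.dvd_of_dvd_mul_right (hG ▸ index_dvd_card _)

theorem MonoidHom.card_range_ne_twelve_of_closure_sq_eq_one {α : Type*} [Fintype α]
    [DecidableEq α] (hα : Nat.card α = 4) (f : G →* Perm α) {S : Set G} (hS : closure S = ⊤)
    (hS2 : ∀ g ∈ S, g ^ 2 = 1) : Nat.card f.range ≠ 12 := by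
  intro h12
  have hA : f.range = alternatingGroup α := by
    refine Perm.eq_alternatingGroup_of_index_eq_two ?_
    have h := card_mul_index f.range
    rw [h12, Nat.card_perm, hα, show Nat.factorial 4 = 12 * 2 from rfl] at h
    omega
  let ψ : G →* alternatingGroup α := f.codRestrict _ fun g => hA ▸ ⟨g, rfl⟩
  have hψ : Function.Surjective ψ := by
    rintro ⟨σ, hσ⟩
    obtain ⟨g, rfl⟩ := (hA ▸ hσ : σ ∈ f.range)
    exact ⟨g, rfl⟩
  have := alternatingGroup.normal_kleinFour hα
  have hN : ((alternatingGroup.kleinFour α).comap ψ).index = 3 := by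
    have h := card_mul_index (alternatingGroup.kleinFour α)
    rw [alternatingGroup.kleinFour_card_of_card_eq_four hα,
      alternatingGroup.card_of_card_eq_four hα] at h
    rw [index_comap_of_surjective _ hψ]
    omega
  have htop := eq_top_of_odd_index (by rw [hN]; decide) hS hS2
  rw [htop, index_top] at hN
  exact absurd hN (by norm_num)

theorem card_sylow_three_ne_four_of_closure_sq_eq_one [Finite G] {m : ℕ}
    (hG : Nat.card G = 4 * 3 ^ m) {S : Set G} (hS : closure S = ⊤) (hS2 : ∀ g ∈ S, g ^ 2 = 1) :
    Nat.card (Sylow 3 G) ≠ 4 := by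
  classical
  intro hn
  have := Fact.mk Nat.prime_three
  have := Fintype.ofFinite (Sylow 3 G)
  obtain ⟨P⟩ : Nonempty (Sylow 3 G) := inferInstance
  let φ := toPermHom G (Sylow 3 G)
  have h4 : 4 ∣ φ.ker.index := by
    rw [← hn, ← index_stabilizer_of_transitive G P]
    exact index_dvd_of_le fun g hg => congr($hg P)
  have h24 : φ.ker.index ∣ 24 := by
    rw [index_ker φ, show 24 = Nat.card (Perm (Sylow 3 G)) by rw [Nat.card_perm, hn]; rfl]
    exact card_subgroup_dvd_card _
  obtain hK | hK := Nat.eq_four_or_twelve_of_dvd h4 h24 (hG ▸ index_dvd_card _)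
  · have hKp : IsPGroup 3 φ.ker := IsPGroup.of_card (n := m) (by
      have h := card_mul_index φ.ker
      rw [hK, hG] at h
      omega)
    have := Sylow.unique_of_normal (hKp.toSylow (by rw [hK]; norm_num)) φ.normal_ker
    rw [Nat.card_unique] at hn
    exact absurd hn (by norm_num)
  · rw [index_ker φ] at hK
    exact φ.card_range_ne_twelve_of_closure_sq_eq_one hn hS hS2 hK

end

theorem stmt_4_general (p m : ℕ) (hp : p.Prime)
    {G : Type*} [Group G] [Finite G] (hG : Nat.card G = 4 * p ^ m)
    (ρ₀ ρ₁ ρ₂ : G) (h₀ : orderOf ρ₀ = 2) (h₁ : orderOf ρ₁ = 2) (h₂ : orderOf ρ₂ = 2)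
    (hgen : Subgroup.closure {ρ₀, ρ₁, ρ₂} = ⊤) :
    (∀ P Q : Sylow p G, P = Q) ∧ (∀ P : Sylow p G, (P : Subgroup G).Normal) := by
  have := Fact.mk hp
  have hsq : ∀ g ∈ ({ρ₀, ρ₁, ρ₂} : Set G), g ^ 2 = 1 := by
    rintro g (rfl | rfl | rfl) <;> simp [← orderOf_dvd_iff_pow_eq_one, *]
  obtain ⟨P⟩ : Nonempty (Sylow p G) := inferInstance
  have hn : Nat.card (Sylow p G) = 1 := by
    rcases Nat.eq_one_or_of_dvd_four_of_modEq_one hp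
      ((P.card_dvd_index).trans (P.index_dvd_of_card_eq_mul_pow hG))
      (card_sylow_modEq_one p G) with hn | ⟨hn, rfl⟩
    · exact hn
    · exact absurd hn (card_sylow_three_ne_four_of_closure_sq_eq_one hG hgen hsq)
  have := (Nat.card_eq_one_iff_unique.mp hn).1
  exact ⟨Subsingleton.elim, Sylow.normal_of_subsingleton⟩

theorem stmt_4 (p m : ℕ) (hp : p.Prime) (hodd : Odd p) (hm : 2 ≤ m)
    {G : Type*} [Group G] [Finite G] (hG : Nat.card G = 4 * p ^ m)
    (ρ₀ ρ₁ ρ₂ : G) (h₀ : orderOf ρ₀ = 2) (h₁ : orderOf ρ₁ = 2) (h₂ : orderOf ρ₂ = 2)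
    (hgen : Subgroup.closure {ρ₀, ρ₁, ρ₂} = ⊤) :
    (∀ P Q : Sylow p G, P = Q) ∧ (∀ P : Sylow p G, (P : Subgroup G).Normal) :=
  stmt_4_general p m hp hG ρ₀ ρ₁ ρ₂ h₀ h₁ h₂ hgen
end

section
/- Let G = ⟨ρ₀, ρ₁, ρ₂⟩ be a finite group of order 4p^m (p an odd prime, m ≥ 1) generated by three involutions, and let P be a normal Sylow p-subgroup. If both ρ₀ρ₁ and ρ₁ρ₂ have order a power of p, then a contradiction arises: the quotient G/P would be generated by one involution, hence of order at most 2, while |G/P| = 4. -/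
theorem stmt_6 (p m : ℕ) (hp : p.Prime) (hodd : Odd p) (hm : 1 ≤ m)
    {G : Type*} [Group G] [Finite G] (hG : Nat.card G = 4 * p ^ m)
    (P : Sylow p G) (hPn : (P : Subgroup G).Normal)
    (ρ₀ ρ₁ ρ₂ : G) (h₀ : orderOf ρ₀ = 2) (h₁ : orderOf ρ₁ = 2) (h₂ : orderOf ρ₂ = 2)
    (hgen : Subgroup.closure {ρ₀, ρ₁, ρ₂} = ⊤) :
    ¬ ((∃ a : ℕ, orderOf (ρ₀ * ρ₁) = p ^ a) ∧ (∃ b : ℕ, orderOf (ρ₁ * ρ₂) = p ^ b)) := by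
  haveI : Fact p.Prime := ⟨hp⟩
  rintro ⟨⟨a, ha⟩, ⟨b, hb⟩⟩
  haveI := Sylow.unique_of_normal P hPn
  -- any element of p-power order lies in P
  have hmem : ∀ (x : G) (k : ℕ), orderOf x = p ^ k → x ∈ (P : Subgroup G) := by
    intro x k hk
    have hpg : IsPGroup p (Subgroup.zpowers x) :=
      IsPGroup.of_card (by rw [Nat.card_zpowers, hk])
    obtain ⟨Q, hQ⟩ := hpg.exists_le_sylow
    have : Q = P := Subsingleton.elim _ _
    exact this ▸ hQ (Subgroup.mem_zpowers x)
  have hx : ρ₀ * ρ₁ ∈ (P : Subgroup G) := hmem _ a ha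
  have hy : ρ₁ * ρ₂ ∈ (P : Subgroup G) := hmem _ b hb
  set π := QuotientGroup.mk' (P : Subgroup G) with hπ
  have sq : ∀ x : G, orderOf x = 2 → x * x = 1 := by
    intro x hx2
    have := pow_orderOf_eq_one x
    rwa [hx2, pow_two] at this
  have hinv₀ : ρ₀⁻¹ = ρ₀ := inv_eq_of_mul_eq_one_right (sq ρ₀ h₀)
  have hinv₁ : ρ₁⁻¹ = ρ₁ := inv_eq_of_mul_eq_one_right (sq ρ₁ h₁)
  have hinv₂ : ρ₂⁻¹ = ρ₂ := inv_eq_of_mul_eq_one_right (sq ρ₂ h₂)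
  have he₀ : π ρ₀ = π ρ₁ := QuotientGroup.eq.mpr (by rwa [hinv₀])
  have he₂ : π ρ₂ = π ρ₁ := by
    refine QuotientGroup.eq.mpr ?_
    have := inv_mem hy
    rwa [mul_inv_rev, hinv₁] at this
  -- the quotient is generated by π ρ₁
  have htop : Subgroup.closure {π ρ₁} = ⊤ := by
    have h1 : Subgroup.map π (Subgroup.closure {ρ₀, ρ₁, ρ₂}) =
        Subgroup.closure (π '' {ρ₀, ρ₁, ρ₂}) := MonoidHom.map_closure π _
    rw [hgen, Subgroup.map_top_of_surjective _ (QuotientGroup.mk'_surjective _)] at h1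
    have h3 : π '' {ρ₀, ρ₁, ρ₂} ⊆ {π ρ₁} := by
      rintro q ⟨x, hxmem, rfl⟩
      simp only [Set.mem_insert_iff, Set.mem_singleton_iff] at hxmem
      rcases hxmem with rfl | rfl | rfl
      · exact he₀
      · rfl
      · exact he₂
    exact top_le_iff.mp (h1.le.trans (Subgroup.closure_mono h3))
  have hcardQ : Nat.card (G ⧸ (P : Subgroup G)) = orderOf (π ρ₁) := by
    refine (orderOf_eq_card_of_forall_mem_zpowers ?_).symm
    intro g
    have : g ∈ Subgroup.closure {π ρ₁} := htop ▸ Subgroup.mem_top g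
    rwa [← Subgroup.zpowers_eq_closure] at this
  have hdvd2 : Nat.card (G ⧸ (P : Subgroup G)) ∣ 2 := by
    rw [hcardQ]
    apply orderOf_dvd_of_pow_eq_one
    rw [pow_two, ← map_mul, sq ρ₁ h₁, map_one]
  -- card P = p ^ n
  obtain ⟨n, hn⟩ := IsPGroup.iff_card.mp P.isPGroup'
  have hprod : Nat.card (G ⧸ (P : Subgroup G)) * p ^ n = 4 * p ^ m := by
    rw [← hn, ← Subgroup.card_eq_card_quotient_mul_card_subgroup, hG]
  have hnd : ¬ p ∣ 4 := by
    intro hpd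
    have h2 : p ∣ 2 := Nat.Prime.dvd_of_dvd_pow hp (show p ∣ 2 ^ 2 by norm_num; exact hpd)
    have hle2 := Nat.le_of_dvd (by norm_num) h2
    have := hp.two_le
    have : p = 2 := by omega
    rw [this, Nat.odd_iff] at hodd
    norm_num at hodd
  have hcop : Nat.Coprime (p ^ n) 4 :=
    Nat.Coprime.pow_left _ ((hp.coprime_iff_not_dvd).mpr hnd)
  have hd : p ^ n ∣ 4 * p ^ m := ⟨Nat.card (G ⧸ (P : Subgroup G)), by rw [← hprod, mul_comm]⟩
  have hdvdpm : p ^ n ∣ p ^ m := hcop.dvd_of_dvd_mul_left hd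
  have hple : p ^ n ≤ p ^ m := Nat.le_of_dvd (pow_pos hp.pos m) hdvdpm
  have hle : Nat.card (G ⧸ (P : Subgroup G)) ≤ 2 := Nat.le_of_dvd (by norm_num) hdvd2
  have hfinal : 4 * p ^ m ≤ 2 * p ^ m := by
    calc 4 * p ^ m = Nat.card (G ⧸ (P : Subgroup G)) * p ^ n := hprod.symm
    _ ≤ 2 * p ^ n := Nat.mul_le_mul_right _ hle
    _ ≤ 2 * p ^ m := Nat.mul_le_mul_left _ hple
  have hpos : 0 < p ^ m := pow_pos hp.pos m
  omega
end

section
/- For integers 2 ≤ j ≤ i ≤ p+1, the binomial identity C(p+1−j, i−j)·C(p,j) = C(p,i)·C(i,j) + C(p,i−1)·C(i−1,j) holds. -/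
/-! For `i > j` both products on the right factor through `p.choose j` by `Nat.choose_mul`,
leaving `C(p-j, i-j) + C(p-j, i-1-j)`, which Pascal's rule collapses to `C(p+1-j, i-j)`
(when `j > p` every term vanishes). For `i = j` the second product vanishes since `j ≥ 1`. -/

namespace Nat

theorem choose_mul_choose_add_succ (p j k : ℕ) :
    p.choose j * (p + 1 - j).choose (k + 1)
      = p.choose (j + k + 1) * (j + k + 1).choose j + p.choose (j + k) * (j + k).choose j := by
  rw [choose_mul (by omega), choose_mul (by omega), show j + k + 1 - j = k + 1 by omega,
    Nat.add_sub_cancel_left, ← Nat.mul_add]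
  rcases le_or_gt j p with hjp | hpj
  · rw [show p + 1 - j = p - j + 1 by omega, choose_succ_succ', Nat.add_comm]
  · simp [choose_eq_zero_of_lt hpj]

end Nat

theorem stmt_12_general (p i j : ℕ) (h2 : 2 ≤ j) (hji : j ≤ i) :
    (p + 1 - j).choose (i - j) * p.choose j
      = p.choose i * i.choose j + p.choose (i - 1) * (i - 1).choose j := by
  obtain ⟨k, rfl⟩ := Nat.exists_eq_add_of_le hji
  rcases k with _ | k
  · simp [Nat.choose_eq_zero_of_lt (show j - 1 < j by omega)]
  · rw [Nat.mul_comm, Nat.add_sub_cancel_left, ← Nat.add_assoc, Nat.add_sub_cancel]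
    exact Nat.choose_mul_choose_add_succ p j k

theorem stmt_12 (p i j : ℕ) (h2 : 2 ≤ j) (hji : j ≤ i) (hip : i ≤ p + 1) :
    (p + 1 - j).choose (i - j) * p.choose j
      = p.choose i * i.choose j + p.choose (i - 1) * (i - 1).choose j :=
  stmt_12_general p i j h2 hji
end

section
/- Let P be a group, β, s ∈ P with elements s_k defined by s₁ = s and s_{k+1} = [s_k, β]. Suppose the subgroup generated by all s_k (k ≥ 1) is abelian and β has order p. Then for 1 ≤ k ≤ p, conjugation satisfies s_k^{β^{1−k}} = ∏_{i=k}^{p+1} s_i^{C(p+1−k, i−k)}. -/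
/-!
Since `s (i + 1) = [s i, β]`, the map `x ↦ β⁻¹ * x * β` acts on the commutative submonoid
generated by `s k, s (k + 1), …` as the endomorphism `s i ↦ s i * s (i + 1)`, i.e. as `1 + Δ`
for the shift `Δ`. Its `n`-th power expands binomially by Pascal's rule, giving the exponents
`n.choose j`. Since `β ^ p = 1`, conjugation by `β ^ (1 - k)` equals conjugation by
`β ^ (p + 1 - k)`.
-/

open Finset

theorem Finset.noncommProd_map {α γ M : Type*} [Monoid M] (s : Finset α) (e : α ↪ γ)
    (f : γ → M) (comm : (s.map e : Set γ).Pairwise (Function.onFun Commute f)) :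
    (s.map e).noncommProd f comm
      = s.noncommProd (f ∘ e) fun _ ha _ hb hab =>
          comm (mem_map_of_mem e ha) (mem_map_of_mem e hb) (e.injective.ne hab) := by
  simp [Finset.noncommProd, Multiset.map_map]

theorem Finset.prod_range_mul_succ_pow_choose {M : Type*} [CommMonoid M] (u : ℕ → M) (n : ℕ) :
    ∏ j ∈ range (n + 1), (u j * u (j + 1)) ^ n.choose j
      = ∏ j ∈ range (n + 2), u j ^ (n + 1).choose j := by
  have shifted : (∏ j ∈ range (n + 1), u (j + 1) ^ n.choose (j + 1)) * u 0
      = ∏ j ∈ range (n + 1), u j ^ n.choose j := by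
    have h := prod_range_succ' (fun j => u j ^ n.choose j) (n + 1)
    rw [prod_range_succ, Nat.choose_succ_self, pow_zero, mul_one] at h
    simpa using h.symm
  calc ∏ j ∈ range (n + 1), (u j * u (j + 1)) ^ n.choose j
      = (∏ j ∈ range (n + 1), u (j + 1) ^ n.choose j)
          * ∏ j ∈ range (n + 1), u j ^ n.choose j := by
        rw [← prod_mul_distrib]
        exact prod_congr rfl fun j _ => by rw [mul_pow, mul_comm]
    _ = (∏ j ∈ range (n + 1), u (j + 1) ^ (n + 1).choose (j + 1)) * u 0 := by
        rw [← shifted, ← mul_assoc, ← prod_mul_distrib]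
        simp only [Nat.choose_succ_succ, pow_add]
    _ = ∏ j ∈ range (n + 2), u j ^ (n + 1).choose j := by
        rw [prod_range_succ' _ (n + 1)]
        simp

theorem MonoidHom.iterate_apply_eq_prod_pow_choose {M : Type*} [CommMonoid M] (φ : M →* M)
    (u : ℕ → M) (hφ : ∀ i, φ (u i) = u i * u (i + 1)) (n : ℕ) :
    φ^[n] (u 0) = ∏ j ∈ Finset.range (n + 1), u j ^ n.choose j := by
  induction n with
  | zero => simp
  | succ n ih =>
    rw [Function.iterate_succ_apply', ih, map_prod]
    simp only [map_pow, hφ]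
    exact prod_range_mul_succ_pow_choose u n

open scoped IsMulCommutative in
theorem conj_pow_eq_noncommProd_pow_choose {P : Type*} [Group P] {β : P} {u : ℕ → P}
    (hconj : ∀ i, β⁻¹ * u i * β = u i * u (i + 1)) (hcomm : ∀ i j, Commute (u i) (u j))
    (n : ℕ) :
    (β ^ n)⁻¹ * u 0 * β ^ n
      = (range (n + 1)).noncommProd (fun j => u j ^ n.choose j)
          (fun i _ j _ _ => (hcomm i j).pow_pow _ _) := by
  set S := Submonoid.closure (Set.range u)
  have : IsMulCommutative S := Submonoid.isMulCommutative_closure P (by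
    rintro _ ⟨i, rfl⟩ _ ⟨j, rfl⟩; exact hcomm _ _)
  let v : ℕ → S := fun j => ⟨u j, Submonoid.subset_closure ⟨j, rfl⟩⟩
  have hS : S ≤ S.comap (MulAut.conj β⁻¹).toMonoidHom := by
    refine Submonoid.closure_le.mpr ?_
    rintro _ ⟨j, rfl⟩
    simpa [hconj] using S.mul_mem (v j).2 (v (j + 1)).2
  let φ : S →* S := ((MulAut.conj β⁻¹).toMonoidHom.comp S.subtype).codRestrict S
    fun x => hS x.2
  have hφ : ∀ j, φ (v j) = v j * v (j + 1) := fun j => Subtype.ext <| by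
    change β⁻¹ * u j * β⁻¹⁻¹ = u j * u (j + 1)
    rw [inv_inv, hconj]
  have hφ_iterate : ∀ (m : ℕ) (x : S), ((φ^[m] x : S) : P) = (β ^ m)⁻¹ * x * β ^ m := by
    intro m
    induction m with
    | zero => simp
    | succ m ih =>
      intro x
      rw [Function.iterate_succ_apply, ih]
      change (β ^ m)⁻¹ * (β⁻¹ * x * β⁻¹⁻¹) * β ^ m = _
      group
  calc (β ^ n)⁻¹ * u 0 * β ^ n = ((φ^[n] (v 0) : S) : P) := (hφ_iterate n (v 0)).symm
    _ = ((∏ j ∈ range (n + 1), v j ^ n.choose j : S) : P) := by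
        rw [φ.iterate_apply_eq_prod_pow_choose v hφ]
    _ = _ := by
        rw [← noncommProd_eq_prod, ← S.coe_subtype]
        exact map_noncommProd _ _ _ S.subtype

theorem stmt_13_general (p : ℕ)
    {P : Type*} [Group P] (β : P) (hβ : orderOf β = p)
    (s : ℕ → P) (hrec : ∀ k : ℕ, 1 ≤ k → s (k + 1) = (s k)⁻¹ * β⁻¹ * s k * β)
    (hcomm : ∀ i j : ℕ, Commute (s i) (s j)) :
    ∀ k : ℕ, 1 ≤ k → k ≤ p →
      (β ^ ((1 : ℤ) - (k : ℤ)))⁻¹ * s k * β ^ ((1 : ℤ) - (k : ℤ))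
        = Finset.noncommProd (Finset.Icc k (p + 1))
            (fun i => s i ^ ((p + 1 - k).choose (i - k)))
            (fun i _ j _ _ => (hcomm i j).pow_pow _ _) := by
  intro k hk hkp
  have hβ_pow : β ^ ((1 : ℤ) - k) = β ^ (p + 1 - k) := by
    rw [← zpow_natCast, zpow_eq_zpow_iff_modEq, hβ, Int.modEq_iff_dvd,
      Nat.cast_sub (by omega)]
    simp
  have hconj : ∀ j, β⁻¹ * s (k + j) * β = s (k + j) * s (k + (j + 1)) := fun j => by
    rw [← add_assoc, hrec _ (by omega)]; group
  have hIcc : Icc k (p + 1) = (range (p + 1 - k + 1)).map (addLeftEmbedding k) := by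
    rw [Nat.range_succ_eq_Icc_zero, map_add_left_Icc, add_zero, Nat.add_sub_cancel' (by omega)]
  rw [hβ_pow]
  refine (conj_pow_eq_noncommProd_pow_choose (u := fun j => s (k + j)) hconj
    (fun _ _ => hcomm _ _) _).trans (Eq.symm ?_)
  refine (noncommProd_congr hIcc (fun _ _ => rfl) _).trans ?_
  exact (noncommProd_map _ _ _ _).trans (noncommProd_congr rfl (fun j _ => by simp) _)

theorem stmt_13 (p : ℕ) (hp : p.Prime) (hodd : Odd p)
    {P : Type*} [Group P] (β : P) (hβ : orderOf β = p)
    (s : ℕ → P) (hrec : ∀ k : ℕ, 1 ≤ k → s (k + 1) = (s k)⁻¹ * β⁻¹ * s k * β)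
    (hcomm : ∀ i j : ℕ, Commute (s i) (s j)) :
    ∀ k : ℕ, 1 ≤ k → k ≤ p →
      (β ^ ((1 : ℤ) - (k : ℤ)))⁻¹ * s k * β ^ ((1 : ℤ) - (k : ℤ))
        = Finset.noncommProd (Finset.Icc k (p + 1))
            (fun i => s i ^ ((p + 1 - k).choose (i - k)))
            (fun i _ j _ _ => (hcomm i j).pow_pow _ _) :=
  stmt_13_general p β hβ s hrec hcomm
end
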